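/- Let D_4 be the weighted oriented triangle with vertices x_1, x_2, x_3, directed edges (x_1,x_2), (x_1,x_3), (x_3,x_2), and weights satisfying w(x_1) = 1, w(x_2) > 1, w(x_3) > 1, so that I(D_4) = (x_1 x_2^{w(x_2)}, x_1 x_3^{w(x_3)}, x_3 x_2^{w(x_2)}). Then reg(I(D_4)) = w(x_2) + w(x_3) > d_4 + 1, where d_4 = max{w(x_i) : i = 1,2,3}. -/

import Mathlib

open MvPolynomial Module

noncomputable section

/-- The polynomial ring `K[x_1, ..., x_n]`. -/
abbrev PolyR (K : Type) [Field K] (n : ℕ) : Type := MvPolynomial (Fin n) K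

variable (K : Type) [Field K] (n : ℕ)

/-- The Koszul differential on `K(x_1,...,x_n) ⊗ R`, where homological degree `i`
elements are encoded as functions on `Finset (Fin n)` supported on sets of card `i`. -/
def kDiff : (Finset (Fin n) → PolyR K n) →ₗ[K] (Finset (Fin n) → PolyR K n) where
  toFun f T := ∑ k ∈ Tᶜ,
      ((-1 : ℤ) ^ (((insert k T).filter (fun j => j < k)).card)) • (X k * f (insert k T))
  map_add' f g := by
    funext T
    simp [mul_add, smul_add, Finset.sum_add_distrib]
  map_smul' c f := by
    funext T
    simp [Finset.smul_sum, mul_smul_comm, smul_comm c]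

/-- The internal-degree-`j`, homological-degree-`i` component of the Koszul complex
of the ideal `I`: functions supported on subsets of cardinality `i`, whose values lie
in `I` and are homogeneous of degree `j - i`. -/
def kosC (I : Ideal (PolyR K n)) (i j : ℕ) : Submodule K (Finset (Fin n) → PolyR K n) :=
  if i ≤ j then
    ⨅ S : Finset (Fin n),
      Submodule.comap (LinearMap.proj S)
        (if S.card = i then
            (Submodule.restrictScalars K I ⊓ homogeneousSubmodule (Fin n) K (j - i))
          else ⊥)
  else ⊥

/-- The graded Betti number `β_{i,j}(I) = dim_K Tor_i(I, K)_j`, computed as the dimension of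
the `(i,j)`-th graded piece of the homology of the Koszul complex `K(x_1,...,x_n) ⊗ I`. -/
def bettiNum (I : Ideal (PolyR K n)) (i j : ℕ) : ℕ :=
  finrank K ↥(kosC K n I i j ⊓ LinearMap.ker (kDiff K n))
    - finrank K ↥(Submodule.map (kDiff K n) (kosC K n I (i + 1) j)
        ⊓ (kosC K n I i j ⊓ LinearMap.ker (kDiff K n)))

/-- The Castelnuovo–Mumford regularity of a homogeneous ideal `I ⊆ K[x_1,...,x_n]`:
`reg I = max { j - i | β_{i,j}(I) ≠ 0 }`. -/
def CMreg (I : Ideal (PolyR K n)) : ℕ :=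
  sSup {d : ℕ | ∃ i j : ℕ, bettiNum K n I i j ≠ 0 ∧ d = j - i}

/-- `I_⟨d⟩`: the ideal generated by the degree-`d` homogeneous component of `I`. -/
def idealComponent (I : Ideal (PolyR K n)) (d : ℕ) : Ideal (PolyR K n) :=
  Ideal.span ((I : Set (PolyR K n)) ∩ {f | f.IsHomogeneous d})

/-- An ideal is componentwise linear if for every `d ≥ 0` the ideal `I_⟨d⟩` is zero or
has a `d`-linear resolution (equivalently, `reg (I_⟨d⟩) = d`). -/
def ComponentwiseLinear (I : Ideal (PolyR K n)) : Prop :=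
  ∀ d : ℕ, idealComponent K n I d = ⊥ ∨ CMreg K n (idealComponent K n I d) = d

/-- A monomial ideal is an ideal generated by monomials. -/
def IsMonomialIdeal (I : Ideal (PolyR K n)) : Prop :=
  ∃ A : Set (Fin n →₀ ℕ), I = Ideal.span ((fun a => monomial a (1 : K)) '' A)

/-- The set `G(I)` of (exponent vectors of) the minimal monomial generators of `I`:
monomials in `I` which are not divisible by any other monomial of `I`. -/
def minMonomialGens (I : Ideal (PolyR K n)) : Set (Fin n →₀ ℕ) :=
  {a | (monomial a (1 : K)) ∈ I ∧
    ∀ b : Fin n →₀ ℕ, b ≤ a → b ≠ a → (monomial b (1 : K)) ∉ I}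

/-- Vertex splittable monomial ideals (Moradi–Khosh-Ahang):
`I = (v)`, `I = 0`, `I = R`, or `I = x I₁ + I₂` where `I₁, I₂` are vertex splittable ideals in
`K[X ∖ {x}]`, `I₂ ⊆ I₁`, and `G(I)` is the disjoint union of `G(xI₁)` and `G(I₂)`. -/
inductive VertexSplittable : Ideal (PolyR K n) → Prop
  | principal (a : Fin n →₀ ℕ) : VertexSplittable (Ideal.span {(monomial a (1 : K) : PolyR K n)})
  | bot : VertexSplittable ⊥
  | top : VertexSplittable ⊤
  | split (x : Fin n) (I₁ I₂ : Ideal (PolyR K n)) :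
      VertexSplittable I₁ → VertexSplittable I₂ →
      (∀ a ∈ minMonomialGens K n I₁, a x = 0) →
      (∀ a ∈ minMonomialGens K n I₂, a x = 0) →
      I₂ ≤ I₁ →
      minMonomialGens K n (Ideal.span {(X x : PolyR K n)} * I₁ + I₂) =
        ((fun a => a + Finsupp.single x 1) '' minMonomialGens K n I₁) ∪
          minMonomialGens K n I₂ →
      Disjoint ((fun a => a + Finsupp.single x 1) '' minMonomialGens K n I₁)
        (minMonomialGens K n I₂) →
      VertexSplittable (Ideal.span {(X x : PolyR K n)} * I₁ + I₂)

/-- A monomial ideal has linear quotients if its minimal monomial generators can be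
ordered `u_1, ..., u_m` so that each colon ideal `((u_1,...,u_{i-1}) : u_i)` is generated by
a subset of the variables. -/
def HasLinearQuotients (I : Ideal (PolyR K n)) : Prop :=
  ∃ (m : ℕ) (u : Fin m → (Fin n →₀ ℕ)),
    Function.Injective u ∧
    minMonomialGens K n I = Set.range u ∧
    ∀ i : Fin m, 0 < (i : ℕ) →
      ∃ S : Set (Fin n),
        Submodule.colon
            (Ideal.span ((fun j : Fin m => (monomial (u j) (1 : K) : PolyR K n)) ''
              {j : Fin m | (j : ℕ) < (i : ℕ)}))
            (Ideal.span {(monomial (u i) (1 : K) : PolyR K n)}) =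
          Ideal.span ((fun v => (X v : PolyR K n)) '' S)

/-- A weighted oriented graph on the vertex set `{x_1, ..., x_n}`: a set of directed edges
(ordered pairs of distinct vertices) together with a weight function `w : V → ℤ_{≥1}`. -/
structure WOGraph (n : ℕ) where
  E : Set (Fin n × Fin n)
  w : Fin n → ℕ
  loopless : ∀ v, (v, v) ∉ E
  one_le_w : ∀ v, 1 ≤ w v

/-- The edge ideal `I(D) = (x y^{w(y)} : (x,y) ∈ E(D))` of a weighted oriented graph. -/
def edgeIdeal (D : WOGraph n) : Ideal (PolyR K n) :=
  Ideal.span {m : PolyR K n | ∃ e ∈ D.E, m = X e.1 * X e.2 ^ D.w e.2}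

/-- The underlying simple graph of a weighted oriented graph. -/
def underlying (D : WOGraph n) : SimpleGraph (Fin n) where
  Adj x y := x ≠ y ∧ ((x, y) ∈ D.E ∨ (y, x) ∈ D.E)
  symm := ⟨fun x y h => ⟨h.1.symm, h.2.symm⟩⟩
  loopless := ⟨fun x h => h.1 rfl⟩

/-- The simple graph `H(I(D)_⟨2⟩)`, whose edges are the pairs `{x,y}` with `xy ∈ I(D)`,
so that `I(H) = I(D)_⟨2⟩`. -/
def Hgraph (D : WOGraph n) : SimpleGraph (Fin n) where
  Adj x y := x ≠ y ∧ (X x * X y : PolyR K n) ∈ edgeIdeal K n D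
  symm := ⟨fun x y h => ⟨h.1.symm, by rw [mul_comm]; exact h.2⟩⟩
  loopless := ⟨fun x h => h.1 rfl⟩

/-- `f : Fin k → V` is an induced cycle of length `k` in `G`: `f` is injective and the
adjacencies among its image are exactly the consecutive (cyclic) ones. -/
def IsInducedCycle {V : Type} (G : SimpleGraph V) (k : ℕ) (f : Fin k → V) : Prop :=
  Function.Injective f ∧
    ∀ a b : Fin k, G.Adj (f a) (f b) ↔
      (((a : ℕ) + 1) % k = (b : ℕ) ∨ ((b : ℕ) + 1) % k = (a : ℕ))

/-- A simple graph is chordal if it has no induced cycle of length `≥ 4`. -/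
def Chordal {V : Type} (G : SimpleGraph V) : Prop :=
  ∀ k : ℕ, 4 ≤ k → ∀ f : Fin k → V, ¬ IsInducedCycle G k f

/-- A vertex cover of `G`: a set of vertices meeting every edge. -/
def IsVertexCover {V : Type} (G : SimpleGraph V) (C : Set V) : Prop :=
  ∀ ⦃x y : V⦄, G.Adj x y → x ∈ C ∨ y ∈ C

/-- A minimal vertex cover: a vertex cover minimal with respect to inclusion. -/
def IsMinimalVertexCover {V : Type} (G : SimpleGraph V) (C : Set V) : Prop :=
  IsVertexCover G C ∧ ∀ C' ⊆ C, IsVertexCover G C' → C' = C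

end


/-!
Fix a multidegree `μ ∈ ℕⁿ`. Recording the coefficient of `x^μ` in `e_T ⊗ f T`, the multidegree-`μ`
strand of the Koszul complex `K(x) ⊗ I` of a monomial ideal `I` becomes the augmented chain complex
of the upper Koszul simplicial complex `{T | x^(μ - e_T) ∈ I}`. Coning off from a vertex `k` with
`μ k ≥ 1` is a contracting homotopy of the full simplex; in homological degree `i` it stays inside
`I` as soon as adding `k` to an `i`-face not containing it gives a face, and then every `i`-cycle of
multidegree `μ` is a boundary.

For `I = (x₀x₁ᵃ, x₀x₂ᵇ, x₂x₁ᵃ)` with `a, b ≥ 1` such a vertex exists whenever `|μ| > a + b + i`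
(`x₀` if `x₀² ∣ x^μ`, else `x₁` if `x₁ᵃ⁺¹ ∣ x^μ`, else `x₂`), so `β_{i,j} = 0` for `j - i > a + b`.
In multidegree `μ = (1, a, b)` the cycle `x₀x₁ᵃ⁻¹x₂ᵇ e₁ - x₀x₁ᵃx₂ᵇ⁻¹ e₂` is not a boundary: its
`e₁`-coefficient could only come from `e₀ ∧ e₁` or `e₁ ∧ e₂`, but neither `x₁ᵃ⁻¹x₂ᵇ` nor
`x₀x₁ᵃ⁻¹x₂ᵇ⁻¹` lies in `I`. Hence `β_{1,a+b+1} ≠ 0` and `reg I = a + b`.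
-/

section Simplex

variable {n : ℕ} {M : Type*} [AddCommGroup M]

def koszulSign (k : Fin n) (T : Finset (Fin n)) : ℤ :=
  (-1) ^ ((insert k T).filter (fun j => j < k)).card

lemma koszulSign_mul_self (k : Fin n) (T : Finset (Fin n)) :
    koszulSign k T * koszulSign k T = 1 := by
  rw [koszulSign, ← pow_add, ← two_mul, pow_mul]; norm_num

lemma koszulSign_insert {j k : Fin n} {U : Finset (Fin n)} (hk : k ∉ U) (hjk : j ≠ k) :
    koszulSign j (insert k U) = (if k < j then -1 else 1) * koszulSign j U := by
  have hkj : k ∉ insert j U := by simp [hk, hjk.symm]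
  rw [koszulSign, koszulSign, Finset.insert_comm j k, Finset.filter_insert]
  split_ifs
  · rw [Finset.card_insert_of_notMem (mt (Finset.mem_filter.mp · |>.1) hkj), pow_succ]; ring
  · ring

lemma koszulSign_insert_mul_koszulSign_insert {j k : Fin n} {U : Finset (Fin n)}
    (hj : j ∉ U) (hk : k ∉ U) (hjk : j ≠ k) :
    koszulSign j (insert k U) * koszulSign k (insert j U) =
      -(koszulSign j U * koszulSign k U) := by
  rw [koszulSign_insert hk hjk, koszulSign_insert hj hjk.symm]
  rcases lt_or_gt_of_ne hjk with h | h <;> simp [h, h.not_gt]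

def simplexBoundary (c : Finset (Fin n) → M) (T : Finset (Fin n)) : M :=
  ∑ j ∈ Tᶜ, koszulSign j T • c (insert j T)

def coneOp (k : Fin n) (c : Finset (Fin n) → M) (S : Finset (Fin n)) : M :=
  if k ∈ S then koszulSign k (S.erase k) • c (S.erase k) else 0

theorem simplexBoundary_coneOp_add_coneOp_simplexBoundary (k : Fin n)
    (c : Finset (Fin n) → M) :
    simplexBoundary (coneOp k c) + coneOp k (simplexBoundary c) = c := by
  funext T
  simp only [Pi.add_apply, simplexBoundary, coneOp]
  by_cases hk : k ∈ T
  · obtain ⟨U, hkU, rfl⟩ : ∃ U, k ∉ U ∧ insert k U = T :=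
      ⟨T.erase k, Finset.notMem_erase k T, Finset.insert_erase hk⟩
    have hcancel : ∀ j ∈ (insert k U)ᶜ, koszulSign j (insert k U) •
        (if k ∈ insert j (insert k U) then koszulSign k ((insert j (insert k U)).erase k) •
          c ((insert j (insert k U)).erase k) else 0) =
        -(koszulSign k U • koszulSign j U • c (insert j U)) := by
      intro j hj
      have hjk : j ≠ k := by rintro rfl; simp at hj
      have hjU : j ∉ U := by simp_all
      rw [if_pos (by simp), Finset.erase_insert_of_ne hjk, Finset.erase_insert hkU,
        smul_smul, koszulSign_insert_mul_koszulSign_insert hjU hkU hjk, smul_smul, neg_smul,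
        mul_comm]
    have hcompl : Uᶜ = insert k (insert k U)ᶜ := by
      rw [← Finset.compl_erase, Finset.erase_insert hkU]
    rw [Finset.sum_congr rfl hcancel, if_pos (Finset.mem_insert_self k U),
      Finset.erase_insert hkU, hcompl, Finset.sum_insert (by simp),
      Finset.sum_neg_distrib, smul_add, smul_smul, koszulSign_mul_self, one_smul,
      Finset.smul_sum]
    abel
  · rw [if_neg hk, add_zero, Finset.sum_eq_single k]
    · rw [if_pos (Finset.mem_insert_self k T), Finset.erase_insert hk, smul_smul,
        koszulSign_mul_self, one_smul]
    · intro j _ hjk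
      rw [if_neg (by simp [hk, Ne.symm hjk]), smul_zero]
    · intro h; exact absurd (Finset.mem_compl.mpr hk) h

end Simplex

noncomputable section KoszulStrands

variable {K : Type} [Field K] {n : ℕ}

def sqfreeExp (T : Finset (Fin n)) : Fin n →₀ ℕ := ∑ k ∈ T, Finsupp.single k 1

lemma sqfreeExp_apply (T : Finset (Fin n)) (i : Fin n) :
    sqfreeExp T i = if i ∈ T then 1 else 0 := by
  simp [sqfreeExp, Finsupp.finsetSum_apply, Finsupp.single_apply]

lemma tsub_sqfreeExp_apply (μ : Fin n →₀ ℕ) (T : Finset (Fin n)) (l : Fin n) :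
    (μ - sqfreeExp T) l = μ l - if l ∈ T then 1 else 0 := by
  rw [Finsupp.tsub_apply, sqfreeExp_apply]

lemma sqfreeExp_insert {k : Fin n} {T : Finset (Fin n)} (hk : k ∉ T) :
    sqfreeExp (insert k T) = sqfreeExp T + Finsupp.single k 1 := by
  rw [sqfreeExp, Finset.sum_insert hk, add_comm, sqfreeExp]

lemma sqfreeExp_le_iff {T : Finset (Fin n)} {μ : Fin n →₀ ℕ} :
    sqfreeExp T ≤ μ ↔ ∀ i ∈ T, 1 ≤ μ i := by
  refine ⟨fun h i hi => ?_, fun h i => ?_⟩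
  · simpa [sqfreeExp_apply, hi] using h i
  · rw [sqfreeExp_apply]; split_ifs with hi
    · exact h i hi
    · exact Nat.zero_le _

lemma degree_sqfreeExp (T : Finset (Fin n)) : (sqfreeExp T).degree = T.card := by
  simp [sqfreeExp, map_sum]

lemma degree_tsub_sqfreeExp_add_card {T : Finset (Fin n)} {μ : Fin n →₀ ℕ}
    (h : sqfreeExp T ≤ μ) : (μ - sqfreeExp T).degree + T.card = μ.degree := by
  rw [← degree_sqfreeExp, ← map_add, tsub_add_cancel_of_le h]

/-- The coefficient of `x^μ` in `f T`, where the basis vector `e_T` of the Koszul complex carries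
the multidegree `sqfreeExp T`. -/
def mdCoeff (μ : Fin n →₀ ℕ) (f : Finset (Fin n) → PolyR K n) (T : Finset (Fin n)) : K :=
  coeff μ (monomial (sqfreeExp T) 1 * f T)

def liftCoeff (μ : Fin n →₀ ℕ) (c : Finset (Fin n) → K) (S : Finset (Fin n)) : PolyR K n :=
  monomial (μ - sqfreeExp S) (c S)

lemma mdCoeff_eq (μ : Fin n →₀ ℕ) (f : Finset (Fin n) → PolyR K n) (T : Finset (Fin n)) :
    mdCoeff μ f T = if sqfreeExp T ≤ μ then coeff (μ - sqfreeExp T) (f T) else 0 := by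
  rw [mdCoeff, coeff_monomial_mul', one_mul]

lemma sqfreeExp_le_of_mdCoeff_ne_zero {μ : Fin n →₀ ℕ} {f : Finset (Fin n) → PolyR K n}
    {T : Finset (Fin n)} (h : mdCoeff μ f T ≠ 0) : sqfreeExp T ≤ μ := by
  by_contra hT
  rw [mdCoeff_eq, if_neg hT] at h
  exact h rfl

lemma X_mul_monomial_tsub_sqfreeExp_insert {k : Fin n} {T : Finset (Fin n)} (hk : k ∉ T)
    {μ : Fin n →₀ ℕ} (h : sqfreeExp (insert k T) ≤ μ) (a : K) :
    X k * monomial (μ - sqfreeExp (insert k T)) a = monomial (μ - sqfreeExp T) a := by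
  rw [sqfreeExp_insert hk] at h ⊢
  rw [X, monomial_mul, one_mul, add_comm, tsub_add_eq_tsub_tsub,
    tsub_add_cancel_of_le (le_tsub_of_add_le_left h)]

lemma mdCoeff_kDiff (μ : Fin n →₀ ℕ) (f : Finset (Fin n) → PolyR K n) :
    mdCoeff μ (kDiff K n f) = simplexBoundary (mdCoeff μ f) := by
  funext T
  simp only [mdCoeff, simplexBoundary, kDiff, LinearMap.coe_mk, AddHom.coe_mk, Finset.mul_sum,
    coeff_sum]
  refine Finset.sum_congr rfl fun k hk => ?_
  have hθ : monomial (sqfreeExp (insert k T)) (1 : K) = monomial (sqfreeExp T) 1 * X k := by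
    rw [sqfreeExp_insert (Finset.mem_compl.mp hk), X, monomial_mul, one_mul]
  rw [hθ, mul_smul_comm, coeff_smul, mul_assoc, koszulSign]

lemma kDiff_liftCoeff {μ : Fin n →₀ ℕ} {c : Finset (Fin n) → K}
    (hc : ∀ S, c S ≠ 0 → sqfreeExp S ≤ μ) :
    kDiff K n (liftCoeff μ c) = liftCoeff μ (simplexBoundary c) := by
  funext T
  simp only [liftCoeff, simplexBoundary, kDiff, LinearMap.coe_mk, AddHom.coe_mk, map_sum,
    map_zsmul]
  refine Finset.sum_congr rfl fun k hk => ?_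
  by_cases h : c (insert k T) = 0
  · simp [h]
  · rw [X_mul_monomial_tsub_sqfreeExp_insert (Finset.mem_compl.mp hk) (hc _ h), koszulSign]

lemma monomial_sqfreeExp_mul_liftCoeff {μ : Fin n →₀ ℕ} {c : Finset (Fin n) → K}
    (hc : ∀ S, c S ≠ 0 → sqfreeExp S ≤ μ) (S : Finset (Fin n)) :
    monomial (sqfreeExp S) 1 * liftCoeff μ c S = monomial μ (c S) := by
  by_cases h : c S = 0
  · simp [liftCoeff, h]
  · rw [liftCoeff, monomial_mul, one_mul, add_tsub_cancel_of_le (hc S h)]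

def mdSupport (f : Finset (Fin n) → PolyR K n) : Finset (Fin n →₀ ℕ) :=
  Finset.univ.biUnion fun T => (monomial (sqfreeExp T) 1 * f T).support

theorem sum_liftCoeff_mdCoeff (f : Finset (Fin n) → PolyR K n) :
    ∑ μ ∈ mdSupport f, liftCoeff μ (mdCoeff μ f) = f := by
  funext T
  refine mul_left_cancel₀ (monomial_eq_zero.not.mpr one_ne_zero :
    monomial (sqfreeExp T) (1 : K) ≠ 0) ?_
  rw [Finset.sum_apply, Finset.mul_sum]
  simp_rw [monomial_sqfreeExp_mul_liftCoeff (fun _ => sqfreeExp_le_of_mdCoeff_ne_zero)]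
  conv_rhs => rw [← support_sum_monomial_coeff (monomial (sqfreeExp T) 1 * f T)]
  refine (Finset.sum_subset (Finset.subset_biUnion_of_mem _ (Finset.mem_univ T))
    fun μ _ hμ => ?_).symm
  rw [mdCoeff, notMem_support_iff.mp hμ, monomial_zero]

lemma IsMonomialIdeal.monomial_mem_of_coeff_ne_zero {I : Ideal (PolyR K n)}
    (hI : IsMonomialIdeal K n I) {p : PolyR K n} (hp : p ∈ I) {ν : Fin n →₀ ℕ}
    (h : coeff ν p ≠ 0) : monomial ν (1 : K) ∈ I := by
  obtain ⟨A, rfl⟩ := hI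
  rw [mem_ideal_span_monomial_image] at hp ⊢
  intro ξ hξ
  rw [Finset.mem_singleton.mp (support_monomial_subset hξ)]
  exact hp ν (mem_support_iff.mpr h)

lemma mem_kosC_iff {I : Ideal (PolyR K n)} {i j : ℕ} (hij : i ≤ j)
    {f : Finset (Fin n) → PolyR K n} :
    f ∈ kosC K n I i j ↔ ∀ S : Finset (Fin n),
      (S.card = i → f S ∈ I ∧ (f S).IsHomogeneous (j - i)) ∧ (S.card ≠ i → f S = 0) := by
  rw [kosC, if_pos hij]
  simp only [Submodule.mem_iInf, Submodule.mem_comap, LinearMap.proj_apply]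
  refine forall_congr' fun S => ?_
  by_cases h : S.card = i
  · simp [h, Submodule.mem_inf, mem_homogeneousSubmodule]
  · simp [h, Submodule.mem_bot]

lemma liftCoeff_mem_kosC {I : Ideal (PolyR K n)} {i j : ℕ} (hij : i ≤ j) {μ : Fin n →₀ ℕ}
    {c : Finset (Fin n) → K}
    (hc : ∀ S, c S ≠ 0 → S.card = i ∧ sqfreeExp S ≤ μ ∧ monomial (μ - sqfreeExp S) (1 : K) ∈ I ∧
      μ.degree = j) :
    liftCoeff μ c ∈ kosC K n I i j := by
  rw [mem_kosC_iff hij]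
  intro S
  by_cases h : c S = 0
  · simp [liftCoeff, h, isHomogeneous_zero]
  obtain ⟨hcard, hle, hmem, hdeg⟩ := hc S h
  refine ⟨fun _ => ⟨?_, isHomogeneous_monomial _ ?_⟩, fun hne => absurd hcard hne⟩
  · rw [liftCoeff, ← mul_one (c S), ← C_mul_monomial]
    exact I.mul_mem_left _ hmem
  · have := degree_tsub_sqfreeExp_add_card hle
    omega

lemma monomial_mem_of_mdCoeff_ne_zero {I : Ideal (PolyR K n)} (hI : IsMonomialIdeal K n I)
    {i j : ℕ} {f : Finset (Fin n) → PolyR K n} (hf : f ∈ kosC K n I i j) {μ : Fin n →₀ ℕ}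
    {T : Finset (Fin n)} (h : mdCoeff μ f T ≠ 0) :
    T.card = i ∧ sqfreeExp T ≤ μ ∧ monomial (μ - sqfreeExp T) (1 : K) ∈ I ∧ μ.degree = j := by
  have hle := sqfreeExp_le_of_mdCoeff_ne_zero h
  rw [mdCoeff_eq, if_pos hle] at h
  by_cases hij : i ≤ j
  swap
  · rw [kosC, if_neg hij, Submodule.mem_bot] at hf
    simp [hf] at h
  have hfT := (mem_kosC_iff hij).mp hf T
  have hcard : T.card = i := by
    by_contra hne
    simp [hfT.2 hne] at h
  obtain ⟨hmem, hhom⟩ := hfT.1 hcard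
  have hdeg : (μ - sqfreeExp T).degree = j - i := by
    rw [Finsupp.degree_eq_weight_one]; exact hhom h
  have := degree_tsub_sqfreeExp_add_card hle
  exact ⟨hcard, hle, hI.monomial_mem_of_coeff_ne_zero hmem h, by omega⟩

/-- In the upper Koszul simplicial complex `{T | x^(μ - e_T) ∈ I}` of `I` at `μ`, every face of
size `i` not containing `k` stays a face after adding `k`. -/
def IsConeVertex (I : Ideal (PolyR K n)) (μ : Fin n →₀ ℕ) (i : ℕ) (k : Fin n) : Prop :=
  1 ≤ μ k ∧ ∀ T : Finset (Fin n), T.card = i → k ∉ T → sqfreeExp T ≤ μ →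
    monomial (μ - sqfreeExp T) (1 : K) ∈ I → monomial (μ - sqfreeExp (insert k T)) (1 : K) ∈ I

lemma monomial_mem_of_coneOp_mdCoeff_ne_zero {I : Ideal (PolyR K n)}
    (hI : IsMonomialIdeal K n I) {i j : ℕ} {f : Finset (Fin n) → PolyR K n}
    (hf : f ∈ kosC K n I i j) {μ : Fin n →₀ ℕ} {k : Fin n}
    (hk : μ.degree = j → IsConeVertex I μ i k) {S : Finset (Fin n)}
    (h : coneOp k (mdCoeff μ f) S ≠ 0) :
    S.card = i + 1 ∧ sqfreeExp S ≤ μ ∧ monomial (μ - sqfreeExp S) (1 : K) ∈ I ∧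
      μ.degree = j := by
  rw [coneOp] at h
  split_ifs at h with hkS
  swap
  · exact absurd rfl h
  have hne : mdCoeff μ f (S.erase k) ≠ 0 := fun h0 => h (by rw [h0, smul_zero])
  obtain ⟨hcard, hle, hmem, hdeg⟩ := monomial_mem_of_mdCoeff_ne_zero hI hf hne
  obtain ⟨hμk, hcone⟩ := hk hdeg
  have hS : insert k (S.erase k) = S := Finset.insert_erase hkS
  refine ⟨?_, ?_, hS ▸ hcone _ hcard (Finset.notMem_erase k S) hle hmem, hdeg⟩
  · rw [← hS, Finset.card_insert_of_notMem (Finset.notMem_erase k S), hcard]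
  · rw [sqfreeExp_le_iff] at hle ⊢
    intro l hl
    by_cases hlk : l = k
    · exact hlk ▸ hμk
    · exact hle l (Finset.mem_erase.mpr ⟨hlk, hl⟩)

theorem mem_map_kDiff_of_isConeVertex {I : Ideal (PolyR K n)} (hI : IsMonomialIdeal K n I)
    {i j : ℕ} (hij : i < j) (apex : (Fin n →₀ ℕ) → Fin n)
    (hapex : ∀ μ : Fin n →₀ ℕ, μ.degree = j → IsConeVertex I μ i (apex μ))
    {f : Finset (Fin n) → PolyR K n} (hf : f ∈ kosC K n I i j) (hcyc : kDiff K n f = 0) :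
    f ∈ (kosC K n I (i + 1) j).map (kDiff K n) := by
  have hlift := fun μ S => monomial_mem_of_coneOp_mdCoeff_ne_zero hI hf (hapex μ) (S := S)
  refine ⟨∑ μ ∈ mdSupport f, liftCoeff μ (coneOp (apex μ) (mdCoeff μ f)),
    Submodule.sum_mem _ fun μ _ => liftCoeff_mem_kosC hij (hlift μ), ?_⟩
  conv_rhs => rw [← sum_liftCoeff_mdCoeff f]
  rw [map_sum]
  refine Finset.sum_congr rfl fun μ _ => ?_
  have hcycμ : simplexBoundary (mdCoeff μ f) = 0 := by
    rw [← mdCoeff_kDiff, hcyc]; funext; simp [mdCoeff]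
  have hhomotopy := simplexBoundary_coneOp_add_coneOp_simplexBoundary (apex μ) (mdCoeff μ f)
  rw [hcycμ, show coneOp (apex μ) (0 : Finset (Fin n) → K) = 0 by funext; simp [coneOp],
    add_zero] at hhomotopy
  rw [kDiff_liftCoeff fun S h => (hlift μ S h).2.1, hhomotopy]

instance finiteDimensional_kosC (I : Ideal (PolyR K n)) (i j : ℕ) :
    FiniteDimensional K (kosC K n I i j) := by
  by_cases hij : i ≤ j
  swap
  · rw [kosC, if_neg hij]; infer_instance
  have : FiniteDimensional K (homogeneousSubmodule (Fin n) K (j - i)) :=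
    Module.Finite.iff_fg.mpr (homogeneousSubmodule_fg _ _ _)
  refine Submodule.finiteDimensional_of_le (S₂ := ⨆ S : Finset (Fin n),
    (homogeneousSubmodule (Fin n) K (j - i)).map (LinearMap.single K (fun _ => PolyR K n) S)) ?_
  rw [Submodule.iSup_map_single]
  intro f hf S _
  obtain ⟨hS, hS'⟩ := (mem_kosC_iff hij).mp hf S
  by_cases h : S.card = i
  · exact (hS h).2
  · rw [hS' h]; exact Submodule.zero_mem _

lemma bettiNum_eq_zero_of_le {I : Ideal (PolyR K n)} {i j : ℕ}
    (h : kosC K n I i j ⊓ LinearMap.ker (kDiff K n) ≤ (kosC K n I (i + 1) j).map (kDiff K n)) :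
    bettiNum K n I i j = 0 := by
  rw [bettiNum, inf_eq_right.mpr h, Nat.sub_self]

lemma bettiNum_ne_zero_of_notMem {I : Ideal (PolyR K n)} {i j : ℕ}
    {z : Finset (Fin n) → PolyR K n} (hz : z ∈ kosC K n I i j) (hcyc : kDiff K n z = 0)
    (hnb : z ∉ (kosC K n I (i + 1) j).map (kDiff K n)) :
    bettiNum K n I i j ≠ 0 := by
  have hlt : (kosC K n I (i + 1) j).map (kDiff K n) ⊓ (kosC K n I i j ⊓ LinearMap.ker (kDiff K n))
      < kosC K n I i j ⊓ LinearMap.ker (kDiff K n) :=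
    lt_of_le_of_ne inf_le_right fun he => by
      have hzZ : z ∈ kosC K n I i j ⊓ LinearMap.ker (kDiff K n) := ⟨hz, hcyc⟩
      exact hnb (Submodule.mem_inf.mp (he ▸ hzZ)).1
  have := Submodule.finrank_lt_finrank_of_lt hlt
  rw [bettiNum]
  omega

lemma mdCoeff_eq_zero_of_mem_map_kDiff {I : Ideal (PolyR K n)} (hI : IsMonomialIdeal K n I)
    {i j : ℕ} {z : Finset (Fin n) → PolyR K n} (hz : z ∈ (kosC K n I (i + 1) j).map (kDiff K n))
    {μ : Fin n →₀ ℕ} {T : Finset (Fin n)}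
    (hT : ∀ k ∉ T, sqfreeExp (insert k T) ≤ μ →
      monomial (μ - sqfreeExp (insert k T)) (1 : K) ∉ I) :
    mdCoeff μ z T = 0 := by
  obtain ⟨g, hg, rfl⟩ := hz
  rw [mdCoeff_kDiff, simplexBoundary]
  refine Finset.sum_eq_zero fun k hk => ?_
  by_contra h
  obtain ⟨-, hle, hmem, -⟩ := monomial_mem_of_mdCoeff_ne_zero hI hg (right_ne_zero_of_smul h)
  exact hT k (Finset.mem_compl.mp hk) hle hmem

theorem CMreg_eq_of_bettiNum {I : Ideal (PolyR K n)} {r : ℕ}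
    (hwit : ∃ i j, bettiNum K n I i j ≠ 0 ∧ j - i = r)
    (hvan : ∀ i j, r < j - i → bettiNum K n I i j = 0) :
    CMreg K n I = r := by
  obtain ⟨i, j, hne, rfl⟩ := hwit
  have hbdd : ∀ d ∈ {d : ℕ | ∃ i j : ℕ, bettiNum K n I i j ≠ 0 ∧ d = j - i}, d ≤ j - i := by
    rintro d ⟨i', j', hne', rfl⟩
    by_contra h
    exact hne' (hvan i' j' (by omega))
  exact le_antisymm (csSup_le ⟨_, i, j, hne, rfl⟩ hbdd) (le_csSup ⟨_, hbdd⟩ ⟨i, j, hne, rfl⟩)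

end KoszulStrands

lemma X_mul_X_pow_eq_monomial {σ R : Type*} [CommSemiring R] (i j : σ) (m : ℕ) :
    (X i * X j ^ m : MvPolynomial σ R) = monomial (Finsupp.single i 1 + Finsupp.single j m) 1 := by
  rw [X_pow_eq_monomial, X, monomial_mul, one_mul]

lemma single_add_single_le_iff {σ : Type*} {i j : σ} (hij : i ≠ j) (p q : ℕ) (ν : σ →₀ ℕ) :
    Finsupp.single i p + Finsupp.single j q ≤ ν ↔ p ≤ ν i ∧ q ≤ ν j := by
  refine ⟨fun h => ⟨by simpa [hij] using h i, by simpa [hij.symm] using h j⟩,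
    fun ⟨hp, hq⟩ l => ?_⟩
  by_cases hli : l = i
  · subst hli; simpa [hij] using hp
  by_cases hlj : l = j
  · subst hlj; simpa [hli] using hq
  simp [Ne.symm hli, Ne.symm hlj]

noncomputable abbrev triangleIdeal (K : Type) [Field K] (a b : ℕ) : Ideal (PolyR K 3) :=
  Ideal.span {X 0 * X 1 ^ a, X 0 * X 2 ^ b, X 2 * X 1 ^ a}

noncomputable section Triangle

variable {K : Type} [Field K]

lemma triangleIdeal_eq_span_monomial (a b : ℕ) :
    triangleIdeal K a b = Ideal.span ((fun ν => monomial ν (1 : K)) ''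
      {Finsupp.single 0 1 + Finsupp.single 1 a, Finsupp.single 0 1 + Finsupp.single 2 b,
        Finsupp.single 2 1 + Finsupp.single 1 a}) := by
  rw [triangleIdeal, X_mul_X_pow_eq_monomial, X_mul_X_pow_eq_monomial, X_mul_X_pow_eq_monomial]
  simp only [Set.image_insert_eq, Set.image_singleton]

lemma isMonomialIdeal_triangleIdeal (a b : ℕ) : IsMonomialIdeal K 3 (triangleIdeal K a b) :=
  ⟨_, triangleIdeal_eq_span_monomial a b⟩

lemma monomial_mem_triangleIdeal_iff {a b : ℕ} {ν : Fin 3 →₀ ℕ} :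
    monomial ν (1 : K) ∈ triangleIdeal K a b ↔
      (1 ≤ ν 0 ∧ a ≤ ν 1) ∨ (1 ≤ ν 0 ∧ b ≤ ν 2) ∨ (1 ≤ ν 2 ∧ a ≤ ν 1) := by
  classical
  rw [triangleIdeal_eq_span_monomial, mem_ideal_span_monomial_image,
    support_monomial, if_neg one_ne_zero]
  simp [single_add_single_le_iff]

def triangleApex (a : ℕ) (μ : Fin 3 →₀ ℕ) : Fin 3 :=
  if 2 ≤ μ 0 then 0 else if a + 1 ≤ μ 1 then 1 else 2

lemma degree_fin_three (μ : Fin 3 →₀ ℕ) : μ.degree = μ 0 + μ 1 + μ 2 := by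
  rw [Finsupp.degree_eq_sum, Fin.sum_univ_three]

lemma isConeVertex_triangleApex {a b i : ℕ} (ha : 1 ≤ a) (hb : 1 ≤ b) {μ : Fin 3 →₀ ℕ}
    (hμ : a + b + i < μ.degree) :
    IsConeVertex (triangleIdeal K a b) μ i (triangleApex a μ) := by
  rw [degree_fin_three] at hμ
  unfold IsConeVertex triangleApex
  simp only [monomial_mem_triangleIdeal_iff, tsub_sqfreeExp_apply, sqfreeExp_le_iff]
  split_ifs with h0 h1
  all_goals
    refine ⟨by omega, fun T hT hk hle hmem => ?_⟩
    fin_cases T <;> simp at hT hk hle hmem ⊢ <;> omega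

def triangleSyzygyCoeff (S : Finset (Fin 3)) : K :=
  if S = {1} then 1 else if S = {2} then -1 else 0

lemma eq_singleton_of_triangleSyzygyCoeff_ne_zero {S : Finset (Fin 3)}
    (h : triangleSyzygyCoeff (K := K) S ≠ 0) : S = {1} ∨ S = {2} := by
  unfold triangleSyzygyCoeff at h
  split_ifs at h with h1 h2
  exacts [Or.inl h1, Or.inr h2, absurd rfl h]

lemma simplexBoundary_triangleSyzygyCoeff :
    simplexBoundary (triangleSyzygyCoeff (K := K)) = 0 := by
  funext T
  rcases T.eq_empty_or_nonempty with rfl | hT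
  · simp [simplexBoundary, koszulSign, Fin.sum_univ_three, triangleSyzygyCoeff,
      Finset.filter_singleton]
  · refine Finset.sum_eq_zero fun j hj => ?_
    by_contra h
    have hcard : (insert j T).card = 1 := by
      rcases eq_singleton_of_triangleSyzygyCoeff_ne_zero (right_ne_zero_of_smul h) with h' | h' <;>
        rw [h', Finset.card_singleton]
    rw [Finset.card_insert_of_notMem (Finset.mem_compl.mp hj)] at hcard
    exact hT.card_pos.ne' (by omega)

def triangleSyzygyDegree (a b : ℕ) : Fin 3 →₀ ℕ := Finsupp.equivFunOnFinite.symm ![1, a, b]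

lemma monomial_mem_of_triangleSyzygyCoeff_ne_zero {a b : ℕ} (ha : 1 ≤ a) (hb : 1 ≤ b)
    {S : Finset (Fin 3)} (h : triangleSyzygyCoeff (K := K) S ≠ 0) :
    S.card = 1 ∧ sqfreeExp S ≤ triangleSyzygyDegree a b ∧
      monomial (triangleSyzygyDegree a b - sqfreeExp S) (1 : K) ∈ triangleIdeal K a b ∧
      (triangleSyzygyDegree a b).degree = a + b + 1 := by
  rcases eq_singleton_of_triangleSyzygyCoeff_ne_zero h with rfl | rfl <;>
    simp [sqfreeExp_le_iff, monomial_mem_triangleIdeal_iff, tsub_sqfreeExp_apply,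
      degree_fin_three, triangleSyzygyDegree] <;> omega

theorem bettiNum_triangleIdeal_ne_zero {a b : ℕ} (ha : 1 ≤ a) (hb : 1 ≤ b) :
    bettiNum K 3 (triangleIdeal K a b) 1 (a + b + 1) ≠ 0 := by
  have hsupp := fun S => monomial_mem_of_triangleSyzygyCoeff_ne_zero (K := K) ha hb (S := S)
  refine bettiNum_ne_zero_of_notMem (liftCoeff_mem_kosC (by omega) hsupp) ?_ fun hz => ?_
  · rw [kDiff_liftCoeff fun S h => (hsupp S h).2.1, simplexBoundary_triangleSyzygyCoeff]
    funext; simp [liftCoeff]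
  · have h0 := mdCoeff_eq_zero_of_mem_map_kDiff (isMonomialIdeal_triangleIdeal a b) hz
      (μ := triangleSyzygyDegree a b) (T := {1}) fun k hk hle => ?_
    · rw [mdCoeff, monomial_sqfreeExp_mul_liftCoeff fun S h => (hsupp S h).2.1, coeff_monomial,
        if_pos rfl, triangleSyzygyCoeff, if_pos rfl] at h0
      exact one_ne_zero h0
    · fin_cases k <;> simp [monomial_mem_triangleIdeal_iff, tsub_sqfreeExp_apply,
        triangleSyzygyDegree] at hk ⊢ <;> omega

theorem CMreg_triangleIdeal {a b : ℕ} (ha : 1 ≤ a) (hb : 1 ≤ b) :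
    CMreg K 3 (triangleIdeal K a b) = a + b :=
  CMreg_eq_of_bettiNum ⟨1, a + b + 1, bettiNum_triangleIdeal_ne_zero ha hb, by omega⟩
    fun _ _ h => bettiNum_eq_zero_of_le fun _ hf =>
      mem_map_kDiff_of_isConeVertex (isMonomialIdeal_triangleIdeal a b) (by omega)
        (triangleApex a) (fun _ hμ => isConeVertex_triangleApex ha hb (by omega)) hf.1 hf.2

end Triangle

/-- For the weighted oriented triangle `D₄` with edges `(x₁,x₂), (x₁,x₃), (x₃,x₂)`,
`w(x₁) = 1`, `w(x₂) > 1`, `w(x₃) > 1`, one has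
`reg I(D₄) = w(x₂) + w(x₃) > d₄ + 1` where `d₄ = max w(xᵢ)`. -/
theorem stmt5 {K : Type} [Field K] (w : Fin 3 → ℕ)
    (h1 : w 0 = 1) (h2 : 1 < w 1) (h3 : 1 < w 2) :
    CMreg K 3 (Ideal.span
        ({X 0 * X 1 ^ w 1, X 0 * X 2 ^ w 2, X 2 * X 1 ^ w 1} : Set (PolyR K 3))) =
        w 1 + w 2 ∧
      w 1 + w 2 > max (w 0) (max (w 1) (w 2)) + 1 :=
  ⟨CMreg_triangleIdeal (by omega) (by omega), by omega⟩
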